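/- arXiv:1909.05832 — 2 statements merged into one kernel-verified Lean document; each statement's English description precedes it below -/
import Mathlib

section
/- (Computational Safety bound, Theorem 2.) Let η be a real number with 0 ≤ η ≤ 1, let Ξ be a positive natural number, set n = ⌈η·Ξ⌉, and let Ñ be a natural number. Let μ be the uniform probability mass function on the n-element subsets of Fin Ξ, and equip the space of functions Fin Ñ → Finset (Fin Ξ) with the Ñ-fold product of μ (independent identical selections). Then the probability of the event {f | ∃ ξ : Fin Ξ, ∀ i : Fin Ñ, ξ ∉ f i} (some chunk is checked by no verifier) is at most Ξ · (1 − η)^Ñ. -/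
open MeasureTheory

instance (Ξ : ℕ) : MeasurableSpace (Finset (Fin Ξ)) := ⊤

/-!
A fixed chunk is missed by one verifier with probability `C(Ξ-1, n) / C(Ξ, n) = (Ξ - n) / Ξ`,
which is at most `1 - η` because `n ≥ η Ξ`. The verifiers are independent, so the chunk is
missed by all of them with probability at most `(1 - η)^Ñ`; a union bound over the `Ξ` chunks
finishes the proof.
-/

open Finset ENNReal

theorem Nat.choose_pred_mul {m : ℕ} (hm : 0 < m) (k : ℕ) :
    (m - 1).choose k * m = m.choose k * (m - k) := by
  obtain ⟨m, rfl⟩ := Nat.exists_eq_add_of_lt hm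
  simpa using Nat.choose_mul_succ_eq m k

section UniformSubset

variable {α : Type*} [Fintype α] [DecidableEq α]

theorem card_powersetCard_univ_filter_notMem (k : ℕ) (a : α) :
    #{s ∈ (univ : Finset α).powersetCard k | a ∉ s} = (Fintype.card α - 1).choose k := by
  have : {s ∈ (univ : Finset α).powersetCard k | a ∉ s} = (univ.erase a).powersetCard k := by
    ext s
    simp [subset_erase, and_comm]
  rw [this, card_powersetCard, card_erase_of_mem (mem_univ a), card_univ]

variable [MeasurableSpace (Finset α)] [DiscreteMeasurableSpace (Finset α)] {k : ℕ}

theorem PMF.toMeasure_uniformOfFinset_powersetCard_notMem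
    (h : ((univ : Finset α).powersetCard k).Nonempty) (a : α) :
    (PMF.uniformOfFinset _ h).toMeasure {s | a ∉ s} =
      ((Fintype.card α - k : ℕ) : ℝ≥0∞) / Fintype.card α := by
  have hm : 0 < Fintype.card α := Fintype.card_pos_iff.2 ⟨a⟩
  have hk : k ≤ Fintype.card α := by simpa using powersetCard_nonempty.1 h
  rw [PMF.toMeasure_uniformOfFinset_apply (ht := .of_discrete)]
  simp only [Set.mem_ofPred_eq]
  rw [card_powersetCard_univ_filter_notMem, card_powersetCard, card_univ,
    ENNReal.div_eq_div_iff (by simpa using hm.ne') (natCast_ne_top _)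
      (by simpa using (Nat.choose_pos hk).ne') (natCast_ne_top _), mul_comm]
  exact_mod_cast Nat.choose_pred_mul hm k

theorem PMF.toMeasure_uniformOfFinset_powersetCard_notMem_le {η : ℝ}
    (h : ((univ : Finset α).powersetCard k).Nonempty) (hη : η * Fintype.card α ≤ k) (a : α) :
    (PMF.uniformOfFinset _ h).toMeasure {s | a ∉ s} ≤ ENNReal.ofReal (1 - η) := by
  have hk : k ≤ Fintype.card α := by simpa using powersetCard_nonempty.1 h
  rw [PMF.toMeasure_uniformOfFinset_powersetCard_notMem]
  refine div_le_of_le_mul ?_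
  rw [← ofReal_natCast, ← ofReal_natCast, ← ofReal_mul' (Nat.cast_nonneg _)]
  refine ofReal_le_ofReal ?_
  push_cast [hk]
  linarith

end UniformSubset

theorem MeasureTheory.Measure.pi_setOf_exists_forall_mem_le {ι J β : Type*}
    [Fintype ι] [Fintype J] [MeasurableSpace β] (μ : Measure β) [SigmaFinite μ]
    (A : J → Set β) {p : ℝ≥0∞} (hA : ∀ j, μ (A j) ≤ p) :
    Measure.pi (fun _ : ι => μ) {f | ∃ j, ∀ i, f i ∈ A j} ≤
      Fintype.card J * p ^ Fintype.card ι := by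
  have hunion : {f : ι → β | ∃ j, ∀ i, f i ∈ A j} = ⋃ j, Set.univ.pi fun _ => A j := by
    ext f
    simp
  calc Measure.pi (fun _ : ι => μ) {f | ∃ j, ∀ i, f i ∈ A j}
      ≤ ∑ j, Measure.pi (fun _ : ι => μ) (Set.univ.pi fun _ => A j) := by
        rw [hunion]; exact measure_iUnion_fintype_le _ _
    _ = ∑ j, μ (A j) ^ Fintype.card ι := by simp [Measure.pi_pi]
    _ ≤ ∑ _j : J, p ^ Fintype.card ι := by gcongr with j; exact hA j
    _ = Fintype.card J * p ^ Fintype.card ι := by simp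

/-- Computational Safety bound (Theorem 2): with `n = ⌈η·Ξ⌉` and `μ` the uniform
distribution on `n`-element subsets of `Fin Ξ`, under the `N`-fold product of `μ`
(independent identical selections by the `N` honest verifiers), the probability that some
chunk is checked by no verifier is at most `Ξ · (1 - η)^N`. (`N` plays the role of `Ñ`.) -/
theorem stmt_7 (η : ℝ) (hη1 : η ≤ 1) (Ξ : ℕ)
    (n : ℕ) (hn : n = ⌈η * (Ξ : ℝ)⌉₊) (N : ℕ) :
    Measure.pi (fun _ : Fin N =>
        (PMF.uniformOfFinset ((Finset.univ : Finset (Fin Ξ)).powersetCard n)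
          (Finset.powersetCard_nonempty.2 (by
            simp only [Finset.card_univ, Fintype.card_fin, hn]
            exact_mod_cast Nat.ceil_le.2 (by
              calc η * (Ξ : ℝ) ≤ 1 * (Ξ : ℝ) := by
                    exact mul_le_mul_of_nonneg_right hη1 (by positivity)
                _ = (Ξ : ℝ) := one_mul _)))).toMeasure)
      {f : Fin N → Finset (Fin Ξ) | ∃ ξ : Fin Ξ, ∀ i : Fin N, ξ ∉ f i}
      ≤ (Ξ : ENNReal) * (ENNReal.ofReal (1 - η)) ^ N := by
  have hη : η * Fintype.card (Fin Ξ) ≤ n := by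
    simpa [hn] using Nat.le_ceil (η * Ξ)
  simpa using Measure.pi_setOf_exists_forall_mem_le (ι := Fin N) _
    (fun ξ : Fin Ξ => {s | ξ ∉ s}) (PMF.toMeasure_uniformOfFinset_powersetCard_notMem_le _ hη)
end

section
/- Let Γ_Tx and Γ_chunk be real numbers with 0 < Γ_Tx ≤ Γ_chunk, and let T be a list of real numbers (transaction computation consumptions) with 0 < T[i] ≤ Γ_Tx for every i. Then T can be partitioned into a concatenation of contiguous nonempty sublists (chunks) C_1, …, C_m such that: (i) the sum of each chunk C_j is at most Γ_chunk, and (ii) for every j < m (i.e., every chunk except possibly the last), the sum of C_j plus the first element of C_{j+1} exceeds Γ_chunk; in particular, the sum of each chunk C_j with j < m exceeds Γ_chunk − Γ_Tx. -/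
/-!
Run the greedy algorithm. A chunk is closed only when the next transaction would push it over
`Γ_chunk`, which is property (ii); since that transaction is at most `Γ_Tx`, the closed chunk
consumes more than `Γ_chunk - Γ_Tx`. Every chunk starts with a single transaction, which fits
because `Γ_Tx ≤ Γ_chunk`.
-/

namespace List

theorem headI_mem_flatten {α : Type*} [Inhabited α] {L : List (List α)} {c : List α} (hc : c ∈ L)
    (hne : c ≠ []) : c.headI ∈ L.flatten := by
  obtain ⟨a, l, rfl⟩ := exists_cons_of_ne_nil hne
  exact mem_flatten_of_mem hc mem_cons_self

variable {α : Type*} [AddMonoid α] [LinearOrder α] (Γ : α)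

/-- Algorithm 1 of the paper, with `cur` the chunk being filled. -/
def greedyChunksFrom : List α → List α → List (List α)
  | cur, [] => [cur]
  | cur, x :: xs =>
    if cur.sum + x ≤ Γ then greedyChunksFrom (cur ++ [x]) xs else cur :: greedyChunksFrom [x] xs

def greedyChunks : List α → List (List α)
  | [] => []
  | x :: xs => greedyChunksFrom Γ [x] xs

variable {Γ}

theorem flatten_greedyChunksFrom (cur xs : List α) :
    (greedyChunksFrom Γ cur xs).flatten = cur ++ xs := by
  induction xs generalizing cur with
  | nil => simp [greedyChunksFrom]
  | cons x xs ih =>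
    unfold greedyChunksFrom
    split_ifs <;> simp [ih]

theorem ne_nil_of_mem_greedyChunksFrom {cur xs : List α} (hcur : cur ≠ []) :
    ∀ c ∈ greedyChunksFrom Γ cur xs, c ≠ [] := by
  induction xs generalizing cur with
  | nil => simpa [greedyChunksFrom]
  | cons x xs ih =>
    unfold greedyChunksFrom
    split_ifs
    · exact ih (by simp)
    · simpa [hcur] using ih (cons_ne_nil x [])

theorem sum_le_of_mem_greedyChunksFrom {cur xs : List α} (hcur : cur.sum ≤ Γ)
    (hxs : ∀ x ∈ xs, x ≤ Γ) : ∀ c ∈ greedyChunksFrom Γ cur xs, c.sum ≤ Γ := by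
  induction xs generalizing cur with
  | nil => simpa [greedyChunksFrom]
  | cons x xs ih =>
    have hxs' : ∀ y ∈ xs, y ≤ Γ := fun y hy => hxs y (mem_cons_of_mem x hy)
    unfold greedyChunksFrom
    split_ifs with hfits
    · exact ih (by simpa using hfits) hxs'
    · simpa [hcur] using ih (by simpa using hxs x mem_cons_self) hxs'

theorem headI_of_mem_head?_greedyChunksFrom [Inhabited α] {cur xs : List α} (hcur : cur ≠ []) :
    ∀ d ∈ (greedyChunksFrom Γ cur xs).head?, d.headI = cur.headI := by
  obtain ⟨a, l, rfl⟩ := exists_cons_of_ne_nil hcur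
  induction xs generalizing l with
  | nil => simp [greedyChunksFrom]
  | cons x xs ih =>
    unfold greedyChunksFrom
    split_ifs
    · exact ih (l ++ [x]) (cons_ne_nil _ _)
    · simp

theorem isChain_greedyChunksFrom [Inhabited α] {cur xs : List α} (hcur : cur ≠ []) :
    IsChain (fun c d => Γ < c.sum + d.headI) (greedyChunksFrom Γ cur xs) := by
  induction xs generalizing cur with
  | nil => simp [greedyChunksFrom]
  | cons x xs ih =>
    unfold greedyChunksFrom
    split_ifs with hfits
    · exact ih (by simp)
    · refine isChain_cons.mpr ⟨fun d hd => ?_, ih (cons_ne_nil x [])⟩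
      rw [headI_of_mem_head?_greedyChunksFrom (cons_ne_nil x []) d hd]
      exact lt_of_not_ge hfits

theorem flatten_greedyChunks (xs : List α) : (greedyChunks Γ xs).flatten = xs := by
  cases xs with
  | nil => rfl
  | cons x xs => simp [greedyChunks, flatten_greedyChunksFrom]

theorem ne_nil_of_mem_greedyChunks {xs : List α} : ∀ c ∈ greedyChunks Γ xs, c ≠ [] := by
  cases xs with
  | nil => simp [greedyChunks]
  | cons x xs => exact ne_nil_of_mem_greedyChunksFrom (cons_ne_nil x [])

theorem sum_le_of_mem_greedyChunks {xs : List α} (hxs : ∀ x ∈ xs, x ≤ Γ) :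
    ∀ c ∈ greedyChunks Γ xs, c.sum ≤ Γ := by
  cases xs with
  | nil => simp [greedyChunks]
  | cons x xs =>
    exact sum_le_of_mem_greedyChunksFrom (by simpa using hxs x mem_cons_self)
      fun y hy => hxs y (mem_cons_of_mem x hy)

theorem isChain_greedyChunks [Inhabited α] (xs : List α) :
    IsChain (fun c d => Γ < c.sum + d.headI) (greedyChunks Γ xs) := by
  cases xs with
  | nil => exact .nil
  | cons x xs => exact isChain_greedyChunksFrom (cons_ne_nil x [])

end List

theorem stmt_9_general (ΓTx Γchunk : ℝ) (hΓ : ΓTx ≤ Γchunk)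
    (T : List ℝ) (hT : ∀ x ∈ T, 0 < x ∧ x ≤ ΓTx) :
    ∃ C : List (List ℝ),
      C.flatten = T
      ∧ (∀ c ∈ C, c ≠ [])
      ∧ (∀ c ∈ C, c.sum ≤ Γchunk)
      ∧ (∀ j : ℕ, j + 1 < C.length →
          Γchunk < (C.getD j []).sum + (C.getD (j + 1) []).headI)
      ∧ (∀ j : ℕ, j + 1 < C.length → Γchunk - ΓTx < (C.getD j []).sum) := by
  set C := List.greedyChunks Γchunk T
  have hflat : C.flatten = T := List.flatten_greedyChunks T
  have hnext : ∀ j, j + 1 < C.length →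
      Γchunk < (C.getD j []).sum + (C.getD (j + 1) []).headI := fun j hj => by
    rw [List.getD_eq_getElem _ _ hj, List.getD_eq_getElem _ _ (Nat.lt_of_succ_lt hj)]
    exact (List.isChain_greedyChunks T).getElem j hj
  refine ⟨C, hflat, List.ne_nil_of_mem_greedyChunks, List.sum_le_of_mem_greedyChunks
    fun x hx => (hT x hx).2.trans hΓ, hnext, fun j hj => ?_⟩
  have hmem : C.getD (j + 1) [] ∈ C := by
    rw [List.getD_eq_getElem _ _ hj]
    exact List.getElem_mem hj
  have hhead : (C.getD (j + 1) []).headI ≤ ΓTx :=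
    (hT _ (hflat ▸ List.headI_mem_flatten hmem (List.ne_nil_of_mem_greedyChunks _ hmem))).2
  linarith [hnext j hj]

/-- Flow's Chunking Algorithm: a list `T` of transaction computation consumptions, each in
`(0, Γ_Tx]` with `0 < Γ_Tx ≤ Γ_chunk`, can be partitioned into a concatenation of contiguous
nonempty chunks `C_1, …, C_m` such that (i) each chunk's sum is at most `Γ_chunk`, and
(ii) for every chunk except the last, its sum plus the first element of the next chunk
exceeds `Γ_chunk`; in particular each such chunk's sum exceeds `Γ_chunk - Γ_Tx`. -/
theorem stmt_9 (ΓTx Γchunk : ℝ) (hΓ0 : 0 < ΓTx) (hΓ : ΓTx ≤ Γchunk)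
    (T : List ℝ) (hT : ∀ x ∈ T, 0 < x ∧ x ≤ ΓTx) :
    ∃ C : List (List ℝ),
      C.flatten = T
      ∧ (∀ c ∈ C, c ≠ [])
      ∧ (∀ c ∈ C, c.sum ≤ Γchunk)
      ∧ (∀ j : ℕ, j + 1 < C.length →
          Γchunk < (C.getD j []).sum + (C.getD (j + 1) []).headI)
      ∧ (∀ j : ℕ, j + 1 < C.length → Γchunk - ΓTx < (C.getD j []).sum) :=
  stmt_9_general ΓTx Γchunk hΓ T hT
end
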